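/- arXiv:2311.13558 — 2 statements merged into one kernel-verified Lean document; each statement's English description precedes it below -/
import Mathlib

section
/- Let (K,v) be a valued field and ν a valuation on K[x] extending v. For all nonconstant f, g ∈ K[x] with fg ∉ supp(ν), the level function satisfies ε_ν(fg) = max{ε_ν(f), ε_ν(g)}. -/
open Polynomial

variable {K : Type*} [Field K] {Λ : Type*} [AddCommGroup Λ] [LinearOrder Λ] [IsOrderedAddMonoid Λ]

/-- `ε` is the level ε_ν(f) = max_{s ≥ 1} (ν(f) - ν(∂ₛ f))/s of `f` (Spivakovsky's level
function), where `∂ₛ` is the `s`-th Hasse–Schmidt derivative. -/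
def IsLevel (ν : AddValuation (Polynomial K) (WithTop Λ)) (f : Polynomial K) (ε : Λ) : Prop :=
  (∀ s : ℕ, 1 ≤ s → ν f ≤ ν (hasseDeriv s f) + ((s • ε : Λ) : WithTop Λ)) ∧
  (∃ s : ℕ, 1 ≤ s ∧ ν f = ν (hasseDeriv s f) + ((s • ε : Λ) : WithTop Λ))

/-!
Write `W f i = ν(∂ᵢ f) + i ε` (`weightedHasseVal`). By the Leibniz rule
`∂ₛ(fg) = ∑_{i+j=s} ∂ᵢ f ∂ⱼ g`, each term of `∂ₛ(fg)` has `ν(∂ᵢ f ∂ⱼ g) + s ε = W f i + W g j`,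
so the ultrametric inequality gives `W (fg) s ≥ ν f + ν g` as soon as both `f` and `g` have level
at most `ε`. For equality, take the largest `s` with `W f s = ν f` and the largest `t` with
`W g t = ν g`: at index `s + t` the term `(s, t)` is the unique one of minimal value, so
`W (fg) (s + t) = ν f + ν g`, and `s + t ≥ 1` because whichever of `f`, `g` has the larger level
attains it at a positive index.
-/

section

variable (ν : AddValuation K[X] (WithTop Λ)) (ε : Λ)

noncomputable def weightedHasseVal (f : K[X]) (i : ℕ) : WithTop Λ :=
  ν (hasseDeriv i f) + ((i • ε : Λ) : WithTop Λ)

variable {ν ε}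

@[simp]
theorem weightedHasseVal_zero (f : K[X]) : weightedHasseVal ν ε f 0 = ν f := by
  simp [weightedHasseVal]

theorem IsLevel.le_weightedHasseVal {f : K[X]} {ε₀ : Λ} (hf : IsLevel ν f ε₀) (hε : ε₀ ≤ ε)
    (i : ℕ) : ν f ≤ weightedHasseVal ν ε f i := by
  rcases Nat.eq_zero_or_pos i with rfl | hi
  · simp
  · calc ν f ≤ ν (hasseDeriv i f) + ((i • ε₀ : Λ) : WithTop Λ) := hf.1 i hi
      _ ≤ weightedHasseVal ν ε f i := by
        unfold weightedHasseVal
        gcongr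
        exact_mod_cast nsmul_le_nsmul_right hε i

theorem IsLevel.exists_weightedHasseVal_eq {f : K[X]} (hf : IsLevel ν f ε) :
    ∃ s, 1 ≤ s ∧ weightedHasseVal ν ε f s = ν f :=
  let ⟨s, hs, h⟩ := hf.2
  ⟨s, hs, h.symm⟩

theorem weightedHasseVal_mul_term (f g : K[X]) {i j s : ℕ} (hij : i + j = s) :
    ν (hasseDeriv i f * hasseDeriv j g) + ((s • ε : Λ) : WithTop Λ) =
      weightedHasseVal ν ε f i + weightedHasseVal ν ε g j := by
  rw [weightedHasseVal, weightedHasseVal, ν.map_mul, ← hij, add_nsmul, WithTop.coe_add]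
  abel

theorem exists_add_weightedHasseVal_le_mul (f g : K[X]) (s : ℕ) :
    ∃ i j, i + j = s ∧
      weightedHasseVal ν ε f i + weightedHasseVal ν ε g j ≤ weightedHasseVal ν ε (f * g) s := by
  obtain ⟨⟨i, j⟩, hmem, hmin⟩ := (Finset.HasAntidiagonal.antidiagonal s).exists_min_image
    (fun ij => ν (hasseDeriv ij.1 f * hasseDeriv ij.2 g)) ⟨(s, 0), by simp⟩
  have hij : i + j = s := Finset.HasAntidiagonal.mem_antidiagonal.mp hmem
  refine ⟨i, j, hij, ?_⟩
  rw [← weightedHasseVal_mul_term f g hij, weightedHasseVal, hasseDeriv_mul]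
  gcongr
  exact ν.map_le_sum hmin

theorem weightedHasseVal_mul_of_forall_lt (f g : K[X]) {s t : ℕ}
    (hfin : weightedHasseVal ν ε f s + weightedHasseVal ν ε g t ≠ ⊤)
    (hlt : ∀ i j, i + j = s + t → (i, j) ≠ (s, t) →
      weightedHasseVal ν ε f s + weightedHasseVal ν ε g t <
        weightedHasseVal ν ε f i + weightedHasseVal ν ε g j) :
    weightedHasseVal ν ε (f * g) (s + t) =
      weightedHasseVal ν ε f s + weightedHasseVal ν ε g t := by
  have hcoe : (((s + t) • ε : Λ) : WithTop Λ) ≠ ⊤ := WithTop.coe_ne_top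
  have hmem : (s, t) ∈ Finset.HasAntidiagonal.antidiagonal (s + t) :=
    Finset.HasAntidiagonal.mem_antidiagonal.mpr rfl
  have hterm := weightedHasseVal_mul_term (ε := ε) (ν := ν) f g (rfl : s + t = s + t)
  have hfin' : ν (hasseDeriv s f * hasseDeriv t g) ≠ ⊤ := by
    rintro h
    rw [h, top_add] at hterm
    exact hfin hterm.symm
  have hrest : ν (hasseDeriv s f * hasseDeriv t g) <
      ν (∑ ij ∈ (Finset.HasAntidiagonal.antidiagonal (s + t)).erase (s, t),
        hasseDeriv ij.1 f * hasseDeriv ij.2 g) := by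
    refine ν.map_lt_sum hfin' fun ⟨i, j⟩ hij => ?_
    obtain ⟨hne, hij⟩ := Finset.mem_erase.mp hij
    have hij := Finset.HasAntidiagonal.mem_antidiagonal.mp hij
    rw [← WithTop.add_lt_add_iff_right hcoe, hterm, weightedHasseVal_mul_term f g hij]
    exact hlt i j hij hne
  rw [weightedHasseVal, hasseDeriv_mul, ← Finset.add_sum_erase _ _ hmem,
    ν.map_add_eq_of_lt_left hrest, hterm]

theorem exists_greatest_weightedHasseVal_eq {f : K[X]} (hf : ν f ≠ ⊤) :
    ∃ s, weightedHasseVal ν ε f s = ν f ∧ ∀ i, weightedHasseVal ν ε f i = ν f → i ≤ s := by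
  classical
  let P i := weightedHasseVal ν ε f i = ν f
  refine ⟨Nat.findGreatest P f.natDegree,
    Nat.findGreatest_spec (P := P) (Nat.zero_le _) (weightedHasseVal_zero f), fun i hi => ?_⟩
  have hi_le : i ≤ f.natDegree := by
    by_contra! hlt
    rw [weightedHasseVal, hasseDeriv_eq_zero_of_lt_natDegree f i hlt,
      ν.map_zero, top_add] at hi
    exact hf hi.symm
  exact Nat.le_findGreatest hi_le hi

theorem weightedHasseVal_mul_eq_of_isGreatest {f g : K[X]} (hf : ν f ≠ ⊤) (hg : ν g ≠ ⊤)
    (hfε : ∀ i, ν f ≤ weightedHasseVal ν ε f i) (hgε : ∀ j, ν g ≤ weightedHasseVal ν ε g j)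
    {s t : ℕ} (hs : weightedHasseVal ν ε f s = ν f)
    (hs_max : ∀ i, weightedHasseVal ν ε f i = ν f → i ≤ s)
    (ht : weightedHasseVal ν ε g t = ν g)
    (ht_max : ∀ j, weightedHasseVal ν ε g j = ν g → j ≤ t) :
    weightedHasseVal ν ε (f * g) (s + t) = ν f + ν g := by
  have hfin : weightedHasseVal ν ε f s + weightedHasseVal ν ε g t ≠ ⊤ := by
    rw [hs, ht]
    exact WithTop.add_ne_top.mpr ⟨hf, hg⟩
  rw [weightedHasseVal_mul_of_forall_lt f g hfin, hs, ht]
  intro i j hij hne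
  rw [hs, ht]
  rcases lt_or_ge s i with hi | hi
  · exact WithTop.add_lt_add_of_lt_of_le hg
      ((hfε i).lt_of_ne fun h => (hs_max i h.symm).not_gt hi) (hgε j)
  · have hj : t < j := by
      by_contra! hj
      exact hne (Prod.ext (by omega) (by omega))
    exact WithTop.add_lt_add_of_le_of_lt hf (hfε i)
      ((hgε j).lt_of_ne fun h => (ht_max j h.symm).not_gt hj)

end

theorem stmt_12_general
    (ν : AddValuation (Polynomial K) (WithTop Λ))
    (f g : Polynomial K)
    (hfg : ν (f * g) ≠ ⊤)
    (εf εg : Λ) (hεf : IsLevel ν f εf) (hεg : IsLevel ν g εg) :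
    IsLevel ν (f * g) (max εf εg) := by
  set ε := max εf εg
  rw [ν.map_mul] at hfg
  obtain ⟨hf, hg⟩ := WithTop.add_ne_top.mp hfg
  have hfε := hεf.le_weightedHasseVal (le_max_left εf εg)
  have hgε := hεg.le_weightedHasseVal (le_max_right εf εg)
  refine ⟨fun s _ => ?_, ?_⟩
  · obtain ⟨i, j, -, hle⟩ := exists_add_weightedHasseVal_le_mul (ε := ε) f g s
    rw [ν.map_mul]
    exact (add_le_add (hfε i) (hgε j)).trans hle
  obtain ⟨s, hs, hs_max⟩ := exists_greatest_weightedHasseVal_eq (ε := ε) hf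
  obtain ⟨t, ht, ht_max⟩ := exists_greatest_weightedHasseVal_eq (ε := ε) hg
  have hst : 1 ≤ s + t := by
    rcases le_total εf εg with hle | hle
    · obtain ⟨j, hj, hj_eq⟩ := hεg.exists_weightedHasseVal_eq
      have := ht_max j (by rwa [show ε = εg from max_eq_right hle])
      omega
    · obtain ⟨i, hi, hi_eq⟩ := hεf.exists_weightedHasseVal_eq
      have := hs_max i (by rwa [show ε = εf from max_eq_left hle])
      omega
  refine ⟨s + t, hst, ?_⟩
  rw [ν.map_mul]
  exact (weightedHasseVal_mul_eq_of_isGreatest hf hg hfε hgε hs hs_max ht ht_max).symm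

/-- For a valuation ν on K[x] extending v and nonconstant f, g with
ν(fg) ≠ ∞, the level function satisfies ε_ν(fg) = max(ε_ν(f), ε_ν(g)). -/
theorem stmt_12 (v : AddValuation K (WithTop Λ))
    (ν : AddValuation (Polynomial K) (WithTop Λ))
    (hext : ∀ a : K, ν (C a) = v a)
    (f g : Polynomial K) (hf : 0 < f.degree) (hg : 0 < g.degree)
    (hfg : ν (f * g) ≠ ⊤)
    (εf εg : Λ) (hεf : IsLevel ν f εf) (hεg : IsLevel ν g εg) :
    IsLevel ν (f * g) (max εf εg) :=
  stmt_12_general ν f g hfg εf εg hεf hεg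
end

section
/- Let Γ be a divisible ordered abelian group, δ a cut in Γ with invariance group H = H(δ) such that δ^L + H has a supremum ξ + H realized by an element ξ of an ordered group extension Γ' ⊇ Γ with ξ + H > x + H for all x ∈ δ^L (vertical supremum). Then for every rational q > 1 and every x ∈ δ^L, there exists y ∈ δ^L such that q(y - x) > ξ - x. -/
/-!
Suppose `q • (y - x) ≤ ξ - x` for all `y ∈ L`. Then the homothety `y ↦ x + q • (y - x)` maps `L` into
itself: if it sent some `y` into `R`, its image would bound `L`, so `ξ ≤ x + q • (y - x) + h` for some
`h ∈ H`; testing the hypothesis at `y + h ∈ L` forces `h ≤ 0`, which makes `y` the maximum of `L`,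
contradicting `ξ + H > y + H`. Iterating the homothety, whose ratios `q ^ n` eventually exceed `2`,
shows that `L` is stable under adding any `d ≥ 0` with `x + d ∈ L`, so all such `d` lie in `H`.
Then `x + H` bounds `L` modulo `H`, contradicting `ξ + H > x + H`.
-/

open scoped Pointwise

section RatSMul

variable {Γ : Type*} [AddCommGroup Γ] [LinearOrder Γ] [IsOrderedAddMonoid Γ] [Module ℚ Γ]

instance IsOrderedAddMonoid.toPosSMulMono_rat : PosSMulMono ℚ Γ :=
  .of_smul_nonneg fun q hq g hg => by
    have hden : q.den • q • g = q.num • g := by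
      rw [← Nat.cast_smul_eq_nsmul ℚ, smul_smul, Rat.den_mul_eq_num, Int.cast_smul_eq_zsmul]
    rw [← nsmul_nonneg_iff q.den_ne_zero, hden]
    exact zsmul_nonneg hg (Rat.num_nonneg.mpr hq)

instance IsOrderedAddMonoid.toPosSMulStrictMono_rat : PosSMulStrictMono ℚ Γ :=
  PosSMulMono.toPosSMulStrictMono

end RatSMul

section Homothety

variable {Γ : Type*} [AddCommGroup Γ] [Module ℚ Γ]

lemma add_pow_smul_mem {L : Set Γ} {x : Γ} {q : ℚ} (hψ : ∀ m, x + m ∈ L → x + q • m ∈ L)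
    (n : ℕ) {m : Γ} (hm : x + m ∈ L) : x + q ^ n • m ∈ L := by
  induction n with
  | zero => simpa using hm
  | succ n ih => simpa [pow_succ', mul_smul] using hψ _ ih

variable [LinearOrder Γ] [IsOrderedAddMonoid Γ]

lemma mem_stabilizer_of_add_smul_mem {L : Set Γ} (hL : IsLowerSet L) {x : Γ} {q : ℚ} (hq : 1 < q)
    (hψ : ∀ m, x + m ∈ L → x + q • m ∈ L) {d : Γ} (hd : 0 ≤ d) (hxd : x + d ∈ L) :
    d ∈ AddAction.stabilizer Γ L := by
  obtain ⟨n, hn⟩ := pow_unbounded_of_one_lt (2 : ℚ) hq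
  have add_mem : ∀ z ∈ L, d + z ∈ L := by
    intro z hz
    set m := max (z - x) d
    have hm : x + m ∈ L := max_rec' (fun m => x + m ∈ L) (by simpa using hz) hxd
    have hm₀ : 0 ≤ m := hd.trans (le_max_right _ _)
    refine hL ?_ (add_pow_smul_mem hψ n hm)
    calc d + z = x + ((z - x) + d) := by abel
      _ ≤ x + (2 : ℚ) • m := by
        rw [two_smul]
        gcongr
        exacts [le_max_left _ _, le_max_right _ _]
      _ ≤ x + q ^ n • m := by grw [smul_le_smul_of_nonneg_right hn.le hm₀]
  refine AddAction.mem_stabilizer_iff.mpr (Set.Subset.antisymm ?_ fun z hz => ?_)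
  · rintro _ ⟨z, hz, rfl⟩
    exact add_mem z hz
  · exact ⟨z - d, hL (sub_le_self z hd) hz, by simp⟩

end Homothety

section VerticalSup

variable {Γ Γ' : Type*} [AddCommGroup Γ] [AddCommGroup Γ'] [Preorder Γ']

/-- `ξ + H = sup (L + H)` in `Γ' ⧸ H`, and this supremum is not attained; the quotient is never
formed, its order being read off representatives. -/
def IsVerticalSup (ι : Γ →+ Γ') (L H : Set Γ) (ξ : Γ') : Prop :=
  (∀ x ∈ L, ∀ h ∈ H, ι x + ι h < ξ) ∧
    ∀ η : Γ', (∀ x ∈ L, ∃ h ∈ H, ι x ≤ η + ι h) → ∃ h ∈ H, ξ ≤ η + ι h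

lemma IsVerticalSup.not_forall_le_add [Preorder Γ] {ι : Γ →+ Γ'} {L H : Set Γ} {ξ : Γ'}
    (hξ : IsVerticalSup ι L H ξ) (hι : Monotone ι) {u : Γ} (hu : u ∈ L) :
    ¬ ∀ w ∈ L, ∃ h ∈ H, w ≤ u + h := fun hbound => by
  obtain ⟨h, hh, hle⟩ := hξ.2 (ι u) fun w hw => by
    obtain ⟨h, hh, hwh⟩ := hbound w hw
    exact ⟨h, hh, by simpa using hι hwh⟩
  exact (hξ.1 u hu h hh).not_ge hle

lemma IsVerticalSup.add_smul_mem [LinearOrder Γ] [IsOrderedAddMonoid Γ] [Module ℚ Γ]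
    {ι : Γ →+ Γ'} {L : Set Γ} {ξ : Γ'} (hξ : IsVerticalSup ι L (AddAction.stabilizer Γ L) ξ)
    (hι : StrictMono ι) (hcut : ∀ w ∈ L, ∀ z ∉ L, w < z) {x : Γ} {q : ℚ} (hq : 1 < q)
    (hbelow : ∀ m, x + m ∈ L → ι (x + q • m) ≤ ξ) {m : Γ} (hm : x + m ∈ L) : x + q • m ∈ L := by
  by_contra hout
  obtain ⟨h, hh, hξh⟩ := hξ.2 (ι (x + q • m)) fun w hw =>
    ⟨0, zero_mem _, by simpa using (hι (hcut w hw _ hout)).le⟩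
  have hscaled : ∀ w ∈ L, q • (w - (x + m)) ≤ h := by
    intro w hw
    have hle : x + q • (w - x) ≤ x + q • m + h := by
      rw [← hι.le_iff_le, map_add ι _ h]
      exact (hbelow (w - x) (by simpa using hw)).trans hξh
    have e : q • (w - (x + m)) = x + q • (w - x) - (x + q • m) := by
      simp only [smul_sub, smul_add]
      abel
    rwa [e, sub_le_iff_le_add']
  have hmh : x + m + h ∈ L := by
    simpa [add_comm h] using (AddAction.mem_stabilizer_set.mp hh (x + m)).mpr hm
  have hh₀ : h ≤ 0 := not_lt.mp fun hpos =>
    (lt_smul_of_one_lt_left hpos hq).not_ge (by simpa using hscaled _ hmh)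
  refine hξ.not_forall_le_add hι.monotone hm fun w hw => ⟨0, zero_mem _, ?_⟩
  have hq₀ : (0 : ℚ) < q := zero_lt_one.trans hq
  have : q • (w - (x + m)) ≤ q • 0 := by simpa using (hscaled w hw).trans hh₀
  simpa using (smul_le_smul_iff_of_pos_left hq₀).mp this

end VerticalSup

/-- Let Γ be a divisible ordered abelian group, δ = (L,R) a cut with
invariance group H = H(δ), and Γ' an ordered group extension of Γ (via a strictly
monotone embedding ι, e.g. the Hahn product from Hahn's embedding theorem). Suppose
ξ ∈ Γ' realizes the vertical supremum: ξ + H = sup{x + H | x ∈ L} in Γ'/H and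
ξ + H > x + H for all x ∈ L. Then for every rational q > 1 and every x ∈ L, there
exists y ∈ L with q(y - x) > ξ - x. -/
theorem stmt_18 {Γ Γ' : Type*} [AddCommGroup Γ] [LinearOrder Γ] [IsOrderedAddMonoid Γ] [Module ℚ Γ]
    [AddCommGroup Γ'] [LinearOrder Γ'] [IsOrderedAddMonoid Γ']
    (ι : Γ →+ Γ') (hι : StrictMono ι)
    (L R : Set Γ) (hLR : ∀ x ∈ L, ∀ y ∈ R, x < y) (hcover : L ∪ R = Set.univ)
    -- H = H(δ), the invariance group of the cut δ
    (H : Set Γ) (hH : H = {h : Γ | (fun x => h + x) '' L = L})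
    (ξ : Γ')
    -- ξ + H > x + H for every x ∈ L (the supremum is not attained in δ^L + H)
    (hub : ∀ x ∈ L, ∀ h ∈ H, ι x + ι h < ξ)
    -- ξ + H is the *least* upper bound of {x + H | x ∈ L} in Γ'/H
    (hlub : ∀ η : Γ', (∀ x ∈ L, ∃ h ∈ H, ι x ≤ η + ι h) → ∃ h ∈ H, ξ ≤ η + ι h) :
    ∀ q : ℚ, 1 < q → ∀ x ∈ L, ∃ y ∈ L, ξ - ι x < ι (q • (y - x)) := by
  intro q hq x hx
  by_contra! hcon
  have hH' : H = AddAction.stabilizer Γ L := by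
    ext h
    simp only [hH, Set.mem_ofPred_eq, SetLike.mem_coe, AddAction.mem_stabilizer_iff, ← Set.image_vadd,
      vadd_eq_add]
  have hξ : IsVerticalSup ι L (AddAction.stabilizer Γ L) ξ := hH' ▸ ⟨hub, hlub⟩
  have hcut : ∀ w ∈ L, ∀ z ∉ L, w < z := fun w hw z hz =>
    hLR w hw z (((Set.ext_iff.mp hcover z).mpr trivial).resolve_left hz)
  have hL : IsLowerSet L := fun a b hba ha => not_not.mp fun hb => (hcut a ha b hb).not_ge hba
  have hψ : ∀ m, x + m ∈ L → x + q • m ∈ L := fun m =>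
    hξ.add_smul_mem hι hcut hq fun m hm => by
      simpa [le_sub_iff_add_le'] using hcon (x + m) hm
  refine hξ.not_forall_le_add hι.monotone hx fun y hy => ?_
  rcases le_total y x with hyx | hxy
  · exact ⟨0, zero_mem _, by simpa using hyx⟩
  · exact ⟨y - x, mem_stabilizer_of_add_smul_mem hL hq hψ (sub_nonneg.mpr hxy) (by simpa using hy),
      by simp⟩
end
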